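/- Let Σ be an alphabet, l ≥ 1, k ≥ 1, u_1,…,u_k ∈ Σ^+, and let L = ⟨u_1,…,u_k⟩_l. Let ω' ≥ Σ_{i=1}^k l·|u_i| be any natural number. Then for all words u, v, x, y ∈ Σ* with uv nonempty: x (uv)^{ω'} y ∈ L if and only if x (uv)^{ω'} u (uv)^{ω'} y ∈ L. -/

import Mathlib

/-- `u^l`: the concatenation of `l` copies of the word `u`. -/
def wpow {α : Type*} (u : List α) (l : ℕ) : List α := (List.replicate l u).flatten

/-- Concatenation of two languages. -/
def lconc {α : Type*} (L K : Set (List α)) : Set (List α) :=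
  {w | ∃ x ∈ L, ∃ y ∈ K, w = x ++ y}

/-- `⟨u⟩_l`: words containing `u` as a factor or `u^l` as a subword. -/
def cc {α : Type*} (u : List α) (l : ℕ) : Set (List α) :=
  {w | u <:+: w ∨ (wpow u l).Sublist w}

/-- `⟨u₁,…,u_k⟩_l`: the concatenation of the languages `⟨uᵢ⟩_l`. -/
def chainConc {α : Type*} (Ls : List (Set (List α))) : Set (List α) :=
  Ls.foldr lconc {[]}

/-!
Write `E = (uv)^ω`. No `uᵢ` is longer than `E`, so an occurrence of `uᵢ` as a factor of
`x E y` lies inside `x E` or inside `E y`; hence in a factorization `x E y = a₁ ⋯ a_k` the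
factor that meets `E` can absorb an inserted `u E`. Conversely, if a factor `aᵢ ∈ ⟨uᵢ⟩_l`
meets the middle of `x E u E y`, then either it contains `uᵢ` inside `x E` or `E y`, or it is
witnessed by letters of `uv` alone; in the latter case `uᵢ^l` is already a subword of
`(uv)^{l|uᵢ|}`, so `aᵢ` can be cut back to end there, and `ω ≥ Σ l|uᵢ|` leaves enough copies
of `uv` for the later factors.
-/

section

variable {α : Type*}

theorem wpow_succ (w : List α) (n : ℕ) : wpow w (n + 1) = w ++ wpow w n := by
  simp [wpow, List.replicate_succ]

theorem wpow_add (w : List α) (m n : ℕ) : wpow w (m + n) = wpow w m ++ wpow w n := by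
  simp only [wpow, List.replicate_add, List.flatten_append]

theorem length_wpow (w : List α) (n : ℕ) : (wpow w n).length = n * w.length := by
  simp [wpow, List.length_flatten]

theorem wpow_subset (w : List α) (n : ℕ) : wpow w n ⊆ w := by
  intro c hc
  obtain ⟨w', hw', hc⟩ := List.mem_flatten.1 hc
  rwa [List.eq_of_mem_replicate hw'] at hc

theorem length_le_length_wpow {d W : List α} {l n : ℕ} (hl : 1 ≤ l) (hW : W ≠ [])
    (hd : l * d.length ≤ n) : d.length ≤ (wpow W n).length := by
  have hW : 1 ≤ W.length := List.length_pos_iff.2 hW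
  rw [length_wpow]
  nlinarith

theorem sublist_wpow_of_subset {t w : List α} {n : ℕ} (ht : t ⊆ w) (hn : t.length ≤ n) :
    t.Sublist (wpow w n) := by
  have hself : ∀ t : List α, t ⊆ w → t.Sublist (wpow w t.length) := by
    intro t
    induction t with
    | nil => simp [wpow]
    | cons c t ih =>
      intro h
      rw [List.length_cons, wpow_succ]
      exact (List.singleton_sublist.2 (h List.mem_cons_self)).append
        (ih (List.subset_of_cons_subset h))
  obtain ⟨k, rfl⟩ := Nat.exists_eq_add_of_le hn
  rw [wpow_add]
  exact (hself t ht).trans (List.sublist_append_left _ _)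

theorem sublist_append_wpow {t p q r w : List α} {n : ℕ} (h : t.Sublist (p ++ q ++ r)) (hq : q ⊆ w)
    (hn : t.length ≤ n) : t.Sublist (p ++ wpow w n ++ r) := by
  obtain ⟨t₁, t₃, rfl, h₁, h₃⟩ := List.sublist_append_iff.1 h
  obtain ⟨t₁, t₂, rfl, h₁, h₂⟩ := List.sublist_append_iff.1 h₁
  simp only [List.length_append] at hn
  exact (h₁.append (sublist_wpow_of_subset (List.Subset.trans h₂.subset hq) (by omega))).append h₃

theorem List.IsInfix.infix_append_or_infix_append {d A B C : List α} (h : d <:+: A ++ B ++ C)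
    (hd : d.length ≤ B.length) : d <:+: A ++ B ∨ d <:+: B ++ C := by
  obtain ⟨s, t, hst⟩ := h
  rw [List.append_assoc s, List.append_assoc A] at hst
  rcases List.append_eq_append_iff.1 hst with ⟨r, hA, hr⟩ | ⟨r, hs, hr⟩
  · left
    have hdt : d <+: r ++ B ++ C := ⟨t, by rw [hr, List.append_assoc]⟩
    obtain ⟨t', ht'⟩ := List.prefix_of_prefix_length_le hdt (List.prefix_append _ _)
      (by simp only [List.length_append]; omega)
    exact ⟨s, t', by rw [hA, List.append_assoc s, ht', List.append_assoc]⟩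
  · exact Or.inr ⟨r, t, by rw [hr, List.append_assoc]⟩

theorem cc_append_left {d w : List α} {l : ℕ} (p : List α) (h : w ∈ cc d l) : p ++ w ∈ cc d l :=
  h.imp (·.trans (List.suffix_append p w).isInfix) (·.trans (List.sublist_append_right p w))

theorem cc_append_right {d w : List α} {l : ℕ} (p : List α) (h : w ∈ cc d l) : w ++ p ∈ cc d l :=
  h.imp (·.trans (List.prefix_append w p).isInfix) (·.trans (List.sublist_append_left w p))

theorem wpow_mem_cc {d w : List α} {l n : ℕ} (hd : d ⊆ w) (hn : l * d.length ≤ n) :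
    wpow w n ∈ cc d l :=
  Or.inr (sublist_wpow_of_subset (List.Subset.trans (wpow_subset d l) hd) (by rwa [length_wpow]))

theorem cc_insert {d E : List α} {l : ℕ} (hd : d.length ≤ E.length) (p z g : List α)
    (h : p ++ E ++ g ∈ cc d l) : p ++ E ++ z ++ E ++ g ∈ cc d l := by
  rcases h with h | h
  · rcases h.infix_append_or_infix_append hd with h | h
    · exact Or.inl (h.trans ⟨[], z ++ E ++ g, by simp⟩)
    · exact Or.inl (h.trans ⟨p ++ E ++ z, [], by simp⟩)
  · exact Or.inr (h.trans (by simp))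

theorem cc_absorb {d W s : List α} {l n : ℕ} (hl : 1 ≤ l) (hW : W ≠ []) (hs : s ⊆ W)
    (hd : l * d.length ≤ n) (p y : List α)
    (h : p ++ (wpow W n ++ s ++ wpow W n) ++ y ∈ cc d l) : p ++ wpow W n ++ y ∈ cc d l := by
  have hdW := length_le_length_wpow (d := d) hl hW hd
  have hQ : wpow W n ++ s ++ wpow W n ⊆ W := by simp [wpow_subset, hs]
  rcases h with h | h
  · have h : d <:+: p ++ wpow W n ++ (s ++ wpow W n ++ y) := by simpa using h
    rcases h.infix_append_or_infix_append hdW with h | h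
    · exact Or.inl (h.trans (List.prefix_append _ _).isInfix)
    · have h : d <:+: wpow W n ++ s ++ wpow W n ++ y := by simpa using h
      rcases h.infix_append_or_infix_append hdW with h | h
      · exact cc_append_right y (cc_append_left p (wpow_mem_cc (List.Subset.trans h.subset hQ) hd))
      · exact Or.inl (h.trans ⟨p, [], by simp⟩)
  · exact Or.inr (sublist_append_wpow h hQ (by rwa [length_wpow]))

theorem cc_absorb_right {d W s : List α} {l j m : ℕ} (hl : 1 ≤ l) (hW : W ≠ []) (hs : s ⊆ W)
    (hj : l * d.length ≤ j) (hjm : j ≤ m) (p : List α)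
    (h : p ++ (wpow W m ++ s ++ wpow W m) ∈ cc d l) : p ++ wpow W j ∈ cc d l := by
  obtain ⟨M, rfl⟩ := Nat.exists_eq_add_of_le hjm
  have hQ : wpow W (j + M) ++ s ++ wpow W (j + M) =
      wpow W j ++ (wpow W M ++ s ++ wpow W M) ++ wpow W j := by
    nth_rw 2 [Nat.add_comm, wpow_add]
    rw [wpow_add]
    simp
  rw [hQ] at h
  simpa using cc_absorb hl hW (s := wpow W M ++ s ++ wpow W M) (by simp [wpow_subset, hs]) hj p []
    (by simpa using h)

def ccLang (l : ℕ) (ds : List (List α)) : Set (List α) :=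
  chainConc (ds.map fun d => cc d l)

theorem mem_ccLang_nil {l : ℕ} {w : List α} : w ∈ ccLang l [] ↔ w = [] := Iff.rfl

theorem mem_ccLang_cons {l : ℕ} {d w : List α} {ds : List (List α)} :
    w ∈ ccLang l (d :: ds) ↔ ∃ a ∈ cc d l, ∃ b ∈ ccLang l ds, w = a ++ b := Iff.rfl

theorem ccLang_append_left {l : ℕ} {d w : List α} {ds : List (List α)} (p : List α)
    (h : w ∈ ccLang l (d :: ds)) : p ++ w ∈ ccLang l (d :: ds) := by
  obtain ⟨a, ha, b, hb, rfl⟩ := mem_ccLang_cons.1 h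
  exact mem_ccLang_cons.2 ⟨p ++ a, cc_append_left p ha, b, hb, by simp⟩

theorem ccLang_insert {l : ℕ} {E : List α} (hE : E ≠ []) (z : List α) :
    ∀ ds : List (List α), (∀ d ∈ ds, d.length ≤ E.length) →
      ∀ x y, x ++ E ++ y ∈ ccLang l ds → x ++ E ++ z ++ E ++ y ∈ ccLang l ds
  | [], _, x, y, h => by simp [mem_ccLang_nil, hE] at h
  | d :: ds, hds, x, y, h => by
    obtain ⟨a, ha, b, hb, hab⟩ := mem_ccLang_cons.1 h
    rw [List.append_assoc, eq_comm] at hab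
    rcases List.append_eq_append_iff.1 hab with ⟨x', rfl, rfl⟩ | ⟨t, rfl, htb⟩
    · refine mem_ccLang_cons.2 ⟨a, ha, _, ccLang_insert hE z ds ?_ x' y ?_, by simp⟩
      · exact fun d' hd' => hds d' (List.mem_cons_of_mem d hd')
      · simpa using hb
    rcases List.append_eq_append_iff.1 htb.symm with ⟨e, rfl, rfl⟩ | ⟨g, rfl, rfl⟩
    · refine mem_ccLang_cons.2 ⟨x ++ t ++ (e ++ z ++ t), cc_append_right _ ha, e ++ y, hb, by simp⟩
    · refine mem_ccLang_cons.2 ⟨x ++ E ++ z ++ E ++ g, ?_, b, hb, by simp⟩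
      exact cc_insert (hds d List.mem_cons_self) x z g (by simpa using ha)

theorem ccLang_absorb {l : ℕ} {W : List α} (hl : 1 ≤ l) (hW : W ≠ []) :
    ∀ (ds : List (List α)) (m : ℕ), (ds.map fun d => l * d.length).sum ≤ m →
      ∀ p s y : List α, s ⊆ W →
        p ++ (wpow W m ++ s ++ wpow W m) ++ y ∈ ccLang l ds → p ++ wpow W m ++ y ∈ ccLang l ds
  | [], m, _, p, s, y, _, h => by
    simp only [mem_ccLang_nil, List.append_eq_nil_iff] at h ⊢
    exact ⟨⟨h.1.1, h.1.2.1.1⟩, h.2⟩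
  | d :: ds, m, hm, p, s, y, hs, h => by
    rw [List.map_cons, List.sum_cons] at hm
    obtain ⟨a, ha, b, hb, hab⟩ := mem_ccLang_cons.1 h
    rw [List.append_assoc, eq_comm] at hab
    rcases List.append_eq_append_iff.1 hab with ⟨p', rfl, rfl⟩ | ⟨t, rfl, htb⟩
    · have hb' := ccLang_absorb hl hW ds m (by omega) p' s y hs (by simpa using hb)
      exact mem_ccLang_cons.2 ⟨a, ha, _, hb', by simp⟩
    rcases List.append_eq_append_iff.1 htb.symm with ⟨r, hQ, rfl⟩ | ⟨y', rfl, rfl⟩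
    swap
    · refine mem_ccLang_cons.2 ⟨p ++ wpow W m ++ y', ?_, b, hb, by simp⟩
      exact cc_absorb hl hW hs (by omega) p y' (by simpa using ha)
    obtain ⟨M, rfl⟩ := Nat.exists_eq_add_of_le (Nat.le_of_add_right_le hm)
    have ha' : p ++ wpow W (l * d.length) ∈ cc d l := by
      have h := cc_append_right r ha
      rw [List.append_assoc, ← hQ] at h
      exact cc_absorb_right hl hW hs le_rfl (Nat.le_add_right _ _) p h
    cases ds with
    | nil =>
      obtain ⟨rfl, rfl⟩ := List.append_eq_nil_iff.1 (mem_ccLang_nil.1 hb)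
      refine mem_ccLang_cons.2 ⟨p ++ wpow W (l * d.length + M), ?_, [], rfl, by simp⟩
      rw [wpow_add, ← List.append_assoc]
      exact cc_append_right _ ha'
    | cons d' ds =>
      refine mem_ccLang_cons.2 ⟨_, ha', wpow W M ++ y, ?_, by rw [wpow_add]; simp⟩
      -- prepending `W^M t` to `r y` gives `W^M (W^m s W^m) y`, which has the shape
      -- `W^M s' W^M y`, so the induction hypothesis applies with an empty prefix
      have h := ccLang_append_left (wpow W M ++ t) hb
      rw [List.append_assoc, ← List.append_assoc t, ← hQ, wpow_add] at h
      have hs' : wpow W (l * d.length) ++ wpow W M ++ s ++ wpow W (l * d.length) ⊆ W := by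
        simp [wpow_subset, hs]
      simpa using ccLang_absorb hl hW (d' :: ds) M (by omega) [] _ y hs' (by simpa using h)

end

theorem stmt_13 {α : Type*} (l k : ℕ) (hl : 1 ≤ l) (hk : 1 ≤ k)
    (us : List (List α)) (hlen : us.length = k) (hne : ∀ u ∈ us, u ≠ [])
    (ω : ℕ) (hω : (us.map fun u => l * u.length).sum ≤ ω)
    (u v x y : List α) (huv : u ++ v ≠ []) :
    (x ++ wpow (u ++ v) ω ++ y ∈ chainConc (us.map fun w => cc w l) ↔
      x ++ wpow (u ++ v) ω ++ u ++ wpow (u ++ v) ω ++ y ∈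
        chainConc (us.map fun w => cc w l)) := by
  have hlenE : ∀ d ∈ us, d.length ≤ (wpow (u ++ v) ω).length := fun d hd =>
    length_le_length_wpow hl huv
      ((List.single_le_sum (fun _ _ => Nat.zero_le _) _ (List.mem_map_of_mem hd)).trans hω)
  have hE : wpow (u ++ v) ω ≠ [] := by
    obtain ⟨d, hd⟩ := List.exists_mem_of_length_pos (by omega : 0 < us.length)
    intro h
    exact hne d hd (List.eq_nil_of_length_eq_zero (by simpa [h] using hlenE d hd))
  constructor
  · exact ccLang_insert hE u us hlenE x y
  · intro h
    have h' : x ++ (wpow (u ++ v) ω ++ u ++ wpow (u ++ v) ω) ++ y ∈ ccLang l us := by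
      simpa only [ccLang, List.append_assoc] using h
    exact ccLang_absorb hl huv us ω hω x u y (List.subset_append_left u v) h'
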